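/- arXiv:1412.4089 — 2 statements merged into one kernel-verified Lean document; each statement's English description precedes it below -/
import Mathlib

section
/- With the context's notation, the set {f₁,…,f_s} is a basis of R = K⟦f₁,…,f_s⟧ (i.e. o(R) = ⟨o(f₁),…,o(f_s)⟩) if and only if for every i ∈ {1,…,r} with Sᵢ ≠ 0 there exists a formal power series Q ∈ K⟦X₁,…,X_s⟧ such that Q(f₁,…,f_s) = Sᵢ and every monomial X₁^{θ₁}⋯X_s^{θ_s} occurring with nonzero coefficient in Q satisfies θ₁·o(f₁) + ⋯ + θ_s·o(f_s) ≥ o(Sᵢ). -/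
set_option synthInstance.maxHeartbeats 1000000
set_option maxHeartbeats 1000000

open PowerSeries

/-- The order of a formal power series: the least `i` such that the coefficient of `x^i`
is nonzero (junk value `0` for the zero series). -/
noncomputable def ord (K : Type*) [Field K] (f : PowerSeries K) : ℕ :=
  sInf {i | coeff i f ≠ 0}

/-- The set of orders of nonzero elements of a subalgebra `R ⊆ K⟦x⟧`. -/
def oSet (K : Type*) [Field K] (R : Subalgebra K (PowerSeries K)) : Set ℕ :=
  {n | ∃ f ∈ R, f ≠ 0 ∧ ord K f = n}

/-- The quotient `K⟦x⟧/R` has finite length as an `R`-module. -/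
def FiniteLengthQuot (K : Type*) [Field K] (R : Subalgebra K (PowerSeries K)) : Prop :=
  IsFiniteLength R (PowerSeries K ⧸ LinearMap.range (Algebra.linearMap R (PowerSeries K)))

/-- The closure of a subalgebra of `K⟦x⟧` in the `x`-adic topology:
`f` belongs to the closure of `S` iff for every `n` there is an element of `S`
agreeing with `f` on all coefficients up to `n`. -/
def adicClosure {K : Type*} [Field K] (S : Subalgebra K (PowerSeries K)) :
    Subalgebra K (PowerSeries K) where
  carrier := {f | ∀ n : ℕ, ∃ p ∈ S, ∀ i ≤ n, coeff i f = coeff i p}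
  add_mem' := by
    intro f g hf hg n
    obtain ⟨p, hpS, hp⟩ := hf n
    obtain ⟨q, hqS, hq⟩ := hg n
    exact ⟨p + q, S.add_mem hpS hqS, fun i hi => by
      simp [map_add, hp i hi, hq i hi]⟩
  mul_mem' := by
    intro f g hf hg n
    obtain ⟨p, hpS, hp⟩ := hf n
    obtain ⟨q, hqS, hq⟩ := hg n
    refine ⟨p * q, S.mul_mem hpS hqS, fun i hi => ?_⟩
    rw [coeff_mul, coeff_mul]
    refine Finset.sum_congr rfl fun ab hab => ?_
    have h := Finset.HasAntidiagonal.mem_antidiagonal.mp hab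
    rw [hp ab.1 (by omega), hq ab.2 (by omega)]
  algebraMap_mem' := fun r => fun n => ⟨algebraMap K _ r, S.algebraMap_mem r, fun i _ => rfl⟩

/-- `K⟦f₁,…,f_s⟧`, the subalgebra of `K⟦x⟧` consisting of all power series of the form
`P(f₁,…,f_s)` with `P ∈ K⟦X₁,…,X_s⟧` (for `fᵢ` of positive order), realized as the
`x`-adic closure of the subalgebra generated by `f₁, …, f_s`; this closure coincides with
the image of the substitution homomorphism `K⟦X₁,…,X_s⟧ → K⟦x⟧`, `Xᵢ ↦ fᵢ`. -/
noncomputable def seriesAlgebra {K : Type*} [Field K] {s : ℕ} (f : Fin s → PowerSeries K) :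
    Subalgebra K (PowerSeries K) :=
  adicClosure (Algebra.adjoin K (Set.range f))

/-- The coefficient of `xⁿ` in the substitution `P(f₁,…,f_s)`: when every `fᵢ` has
positive order, only exponents `θ` with all entries `≤ n` contribute, so the defining sum
is finite. -/
noncomputable def substCoeff {K : Type*} [Field K] {s : ℕ} (f : Fin s → PowerSeries K)
    (P : MvPowerSeries (Fin s) K) (n : ℕ) : K :=
  ∑ θ ∈ Finset.Iic (Finsupp.equivFunOnFinite.symm fun _ : Fin s => n),
    MvPowerSeries.coeff θ P * coeff n (∏ i, f i ^ θ i)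

/-- The substitution homomorphism `ψ : K⟦X₁,…,X_s⟧ → K⟦x⟧`, `Xᵢ ↦ fᵢ` (for `fᵢ` of
positive order), `P ↦ P(f₁,…,f_s)`, given coefficientwise. -/
noncomputable def substSeries {K : Type*} [Field K] {s : ℕ} (f : Fin s → PowerSeries K)
    (P : MvPowerSeries (Fin s) K) : PowerSeries K :=
  PowerSeries.mk (substCoeff f P)

/-!
Weigh the monomial `X^θ` by `θ · w`, where `w j = o(f_j)`. Since the `f_j` are monic, `f^θ` is
monic of order `θ · w`, so `o(Q(f))` is at least the weighted order of `Q`; when that weighted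
order is `≥ d`, the weight-`d` part `A` of `Q` satisfies `φ(A) = c x^d`, where `c` is the
coefficient of `x^d` in `Q(f)`.

(⇒) If every order in `R` is a weight, an element `g ∈ R` of order `n = θ · w` loses its leading
term to `c f^θ`; iterating, the monomials `c X^θ` have increasing weights and sum to a series `Q`
with `Q(f) = g` whose weights are all `≥ o(g)`.

(⇐) Represent a truncation of `g ∈ R` as `P(f)` and raise the weighted order `d` of the
representing series while `d < o(g)`: then `φ(A) = 0`, so `A = Σ gᵢ Fᵢ` with `gᵢ` weighted
homogeneous, and replacing `A` by `Σ gᵢ Qᵢ`, where `Qᵢ(f) = Sᵢ` has all weights `> αᵢ · w`, keeps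
the value. Once `d = o(g)`, the weighted order cannot exceed `o(Q(f)) = o(g)`, so some monomial
of `Q` has weight `o(g)`.
-/

lemma ord_eq_toNat_order {K : Type*} [Field K] (g : PowerSeries K) :
    ord K g = g.order.toNat := by
  rcases eq_or_ne g 0 with rfl | hg
  · simp [ord]
  · apply le_antisymm (Nat.sInf_le (coeff_order hg))
    refine le_csInf ⟨_, coeff_order hg⟩ fun m hm => ?_
    by_contra! h
    exact hm (coeff_of_lt_order_toNat m h)

def IsMonicOfOrder {R : Type*} [Semiring R] (g : PowerSeries R) (n : ℕ) : Prop :=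
  g.order = n ∧ coeff n g = 1

lemma isMonicOfOrder_ord {K : Type*} [Field K] {g : PowerSeries K}
    (h : coeff (ord K g) g = 1) : IsMonicOfOrder g (ord K g) := by
  have hg : g ≠ 0 := by
    rintro rfl
    simp at h
  exact ⟨by rw [ord_eq_toNat_order, coe_toNat_order hg], h⟩

namespace IsMonicOfOrder

lemma ne_zero {R : Type*} [Semiring R] [Nontrivial R] {g : PowerSeries R} {n : ℕ}
    (h : IsMonicOfOrder g n) : g ≠ 0 := by
  rintro rfl
  simpa using h.2

lemma constantCoeff_eq_zero {R : Type*} [Semiring R] {g : PowerSeries R} {n : ℕ}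
    (h : IsMonicOfOrder g n) (hn : 0 < n) : constantCoeff g = 0 :=
  order_ne_zero_iff_constCoeff_eq_zero.mp (by rw [h.1]; exact_mod_cast hn.ne')

lemma prod_pow {R : Type*} [CommRing R] [IsDomain R] {ι : Type*} [Fintype ι]
    {f : ι → PowerSeries R} {w : ι → ℕ} (hf : ∀ i, IsMonicOfOrder (f i) (w i)) (θ : ι →₀ ℕ) :
    IsMonicOfOrder (∏ i, f i ^ θ i) (Finsupp.weight w θ) := by
  have hord : (∏ i, f i ^ θ i).order = Finsupp.weight w θ := by
    rw [order_prod, Finsupp.weight_apply, Finsupp.sum_fintype _ _ (by simp)]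
    push_cast
    exact Finset.sum_congr rfl fun i _ => by simp [order_pow, (hf i).1]
  refine ⟨hord, ?_⟩
  -- the leading coefficient is the constant coefficient of `divXPowOrder`, which is multiplicative
  have hlead (g : PowerSeries R) (n : ℕ) (hg : g.order = n) :
      coeff n g = constantCoeff g.divXPowOrder := by
    rw [constantCoeff_divXPowOrder, hg, ENat.toNat_natCast]
  rw [hlead _ _ hord, divXPowOrder_prod]
  simp [divXPowOrder_pow, ← hlead _ _ (hf _).1, (hf _).2]

lemma lt_order_sub {R : Type*} [Ring R] {g h : PowerSeries R} {n : ℕ}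
    (hg : IsMonicOfOrder g n) (hh : IsMonicOfOrder h n) : n < (g - h).order := by
  refine lt_of_lt_of_le (by exact_mod_cast n.lt_succ_self) (nat_le_order _ _ fun i hi => ?_)
  rw [map_sub, sub_eq_zero]
  rcases (Nat.lt_succ_iff.mp hi).lt_or_eq with hin | rfl
  · rw [coeff_of_lt_order i (hg.1 ▸ by exact_mod_cast hin),
      coeff_of_lt_order i (hh.1 ▸ by exact_mod_cast hin)]
  · rw [hg.2, hh.2]

end IsMonicOfOrder

namespace MvPolynomial

lemma aeval_X_pow_monomial {R σ : Type*} [CommSemiring R] (w : σ → ℕ) (θ : σ →₀ ℕ) (c : R) :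
    aeval (fun j => (Polynomial.X : Polynomial R) ^ w j) (monomial θ c)
      = Polynomial.monomial (Finsupp.weight w θ) c := by
  rw [aeval_monomial, Finsupp.weight_apply, Polynomial.C_mul_X_pow_eq_monomial.symm]
  simp [Finsupp.prod, Finsupp.sum, ← pow_mul, Finset.prod_pow_eq_pow_sum, mul_comm]

lemma weight_eq_of_monomial_sub_mem_ker {σ R : Type*} [CommRing R] [Nontrivial R]
    {w : σ → ℕ} {a b : σ →₀ ℕ}
    (h : monomial a (1 : R) - monomial b 1
      ∈ RingHom.ker (aeval fun j => (Polynomial.X : Polynomial R) ^ w j)) :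
    Finsupp.weight w a = Finsupp.weight w b := by
  rwa [RingHom.mem_ker, map_sub, aeval_X_pow_monomial, aeval_X_pow_monomial, sub_eq_zero,
    Polynomial.monomial_left_inj one_ne_zero] at h

lemma IsWeightedHomogeneous.le_weightedOrder {σ R : Type*} [CommSemiring R]
    {w : σ → ℕ} {p : MvPolynomial σ R} {n : ℕ} (hp : p.IsWeightedHomogeneous w n) :
    n ≤ (p : MvPowerSeries σ R).weightedOrder w :=
  MvPowerSeries.le_weightedOrder w fun θ hθ => by
    rw [coeff_coe]
    by_contra h
    rw [hp h] at hθ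
    exact lt_irrefl _ hθ

end MvPolynomial

namespace MvPowerSeries

lemma nat_le_weightedOrder_iff {σ R : Type*} [Semiring R] {w : σ → ℕ}
    {Q : MvPowerSeries σ R} {n : ℕ} :
    n ≤ Q.weightedOrder w ↔ ∀ θ, coeff θ Q ≠ 0 → n ≤ Finsupp.weight w θ := by
  refine ⟨fun h θ hθ => by exact_mod_cast h.trans (weightedOrder_le w hθ), fun h => ?_⟩
  refine le_weightedOrder w fun θ hθ => ?_
  by_contra hc
  exact absurd (h θ hc) (not_le.mpr (by exact_mod_cast hθ))

theorem exists_limit_of_le_weightedOrder_sub_succ {σ R : Type*} [Ring R]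
    (w : σ → ℕ) (n : ℕ) (Q : ℕ → MvPowerSeries σ R)
    (hQ : ∀ k, ((n + k : ℕ) : ℕ∞) ≤ (Q (k + 1) - Q k).weightedOrder w) :
    ∃ L, ∀ k, ((n + k : ℕ) : ℕ∞) ≤ (L - Q k).weightedOrder w := by
  have stable (θ : σ →₀ ℕ) (k m : ℕ) (hθ : Finsupp.weight w θ < n + k) (hkm : k ≤ m) :
      coeff θ (Q m) = coeff θ (Q k) := by
    induction m, hkm using Nat.le_induction with
    | base => rfl
    | succ m hkm ih =>
      have h := coeff_eq_zero_of_lt_weightedOrder w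
        (lt_of_lt_of_le (by exact_mod_cast (by omega : Finsupp.weight w θ < n + m)) (hQ m))
      rwa [map_sub, sub_eq_zero, ih] at h
  let L : MvPowerSeries σ R := fun θ => coeff θ (Q (Finsupp.weight w θ + 1))
  refine ⟨L, fun k => le_weightedOrder w fun θ hθ => ?_⟩
  have hθ' : Finsupp.weight w θ < n + k := by exact_mod_cast hθ
  rw [map_sub, sub_eq_zero]
  change coeff θ (Q (Finsupp.weight w θ + 1)) = _
  rw [← stable θ _ (max k (Finsupp.weight w θ + 1)) (by omega) (le_max_right _ _),
    stable θ k _ hθ' (le_max_left _ _)]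

lemma exists_coe_eq_weightedHomogeneousComponent {σ R : Type*} [CommSemiring R]
    [Finite σ] {w : σ → ℕ} (hw : ∀ i, w i ≠ 0) (d : ℕ) (Q : MvPowerSeries σ R) :
    ∃ A : MvPolynomial σ R, A.IsWeightedHomogeneous w d ∧
      (A : MvPowerSeries σ R) = weightedHomogeneousComponent w d Q := by
  classical
  let A := truncFinset R (Finsupp.finite_of_nat_weight_eq w hw d).toFinset Q
  have hA : (A : MvPowerSeries σ R) = weightedHomogeneousComponent w d Q := by
    ext θ
    rw [MvPolynomial.coeff_coe, coeff_truncFinset, coeff_weightedHomogeneousComponent]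
    simp
  refine ⟨A, fun θ hθ => ?_, hA⟩
  rw [← MvPolynomial.coeff_coe, hA] at hθ
  exact isWeightedHomogeneous_weightedHomogeneousComponent w Q d hθ

lemma le_weightedOrder_sub_weightedHomogeneousComponent {σ R : Type*} [CommRing R]
    {w : σ → ℕ} {d : ℕ} {Q : MvPowerSeries σ R} (hQ : d ≤ Q.weightedOrder w) :
    ((d + 1 : ℕ) : ℕ∞) ≤ (Q - weightedHomogeneousComponent w d Q).weightedOrder w := by
  refine le_weightedOrder w fun θ hθ => ?_
  have hθ' : Finsupp.weight w θ ≤ d := by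
    exact_mod_cast Order.le_of_lt_add_one (by exact_mod_cast hθ)
  rw [map_sub, coeff_weightedHomogeneousComponent]
  rcases hθ'.lt_or_eq with hlt | heq
  · rw [if_neg hlt.ne, coeff_eq_zero_of_lt_weightedOrder w
      (lt_of_lt_of_le (by exact_mod_cast hlt) hQ), sub_zero]
  · rw [if_pos heq, sub_self]


lemma succ_le_weightedOrder_coe_mul {σ R : Type*} [CommSemiring R] {w : σ → ℕ}
    {p : MvPolynomial σ R} {L : MvPowerSeries σ R} {c d : ℕ}
    (hp : p.IsWeightedHomogeneous w (d - c)) (hpc : p ≠ 0 → c ≤ d) (hL : c < L.weightedOrder w) :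
    ((d + 1 : ℕ) : ℕ∞) ≤ ((p : MvPowerSeries σ R) * L).weightedOrder w := by
  by_cases hp0 : p = 0
  · simp [hp0]
  have hcd := hpc hp0
  refine le_trans ?_ (le_weightedOrder_mul w)
  calc ((d + 1 : ℕ) : ℕ∞) = ((d - c : ℕ) : ℕ∞) + (c + 1) := by
        norm_cast
        omega
    _ ≤ _ := add_le_add hp.le_weightedOrder (Order.add_one_le_of_lt hL)

end MvPowerSeries

theorem DirectSum.exists_sum_mul_mem_of_mem_span {A σ ι : Type*} [CommSemiring A] [SetLike σ A]
    [AddSubmonoidClass σ A] (𝒜 : ℕ → σ) [GradedRing 𝒜] [Fintype ι] {F : ι → A} {c : ι → ℕ}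
    (hF : ∀ i, F i ∈ 𝒜 (c i)) {a : A} {d : ℕ} (ha : a ∈ 𝒜 d)
    (hspan : a ∈ Ideal.span (Set.range F)) :
    ∃ g : ι → A, a = ∑ i, g i * F i ∧ ∀ i, g i ∈ 𝒜 (d - c i) ∧ (g i ≠ 0 → c i ≤ d) := by
  classical
  obtain ⟨h, hh⟩ := Ideal.mem_span_range_iff_exists_fun.mp hspan
  refine ⟨fun i => if c i ≤ d then decompose 𝒜 (h i) (d - c i) else 0, ?_, fun i => ?_⟩
  · rw [← decompose_of_mem_same 𝒜 ha, ← hh, decompose_sum, DFinsupp.finsetSum_apply,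
      AddSubmonoidClass.coe_finsetSum]
    refine Finset.sum_congr rfl fun i _ => ?_
    rw [coe_decompose_mul_of_right_mem 𝒜 d (hF i)]
    by_cases hc : c i ≤ d <;> simp [hc]
  · dsimp only
    split_ifs with hc
    · exact ⟨SetLike.coe_mem _, fun _ => hc⟩
    · exact ⟨zero_mem _, fun h => (h rfl).elim⟩

section Substitution
variable {K : Type*} [Field K] {s : ℕ} {f : Fin s → PowerSeries K}

lemma coeff_prod_pow_eq_zero (hf : ∀ i, constantCoeff (f i) = 0) {θ : Fin s →₀ ℕ} {j : Fin s}
    {n : ℕ} (hn : n < θ j) : coeff n (∏ i, f i ^ θ i) = 0 := by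
  have hdvd : X ^ θ j ∣ ∏ i, f i ^ θ i :=
    (pow_dvd_pow_of_dvd (X_dvd_iff.mpr (hf j)) _).trans
      (Finset.dvd_prod_of_mem _ (Finset.mem_univ j))
  exact X_pow_dvd_iff.mp hdvd n hn

theorem substSeries_eq_subst (hf : ∀ i, constantCoeff (f i) = 0) (P : MvPowerSeries (Fin s) K) :
    substSeries f P = MvPowerSeries.subst f P := by
  ext n
  rw [substSeries, coeff_mk, substCoeff, PowerSeries.coeff,
    MvPowerSeries.coeff_subst (MvPowerSeries.hasSubst_of_constantCoeff_zero hf),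
    finsum_eq_sum_of_support_subset _ (s := Finset.Iic (Finsupp.equivFunOnFinite.symm fun _ => n))]
  · refine Finset.sum_congr rfl fun θ _ => ?_
    rw [Finsupp.prod_fintype _ _ (by simp), smul_eq_mul]
  · intro θ hθ
    by_contra hbox
    simp only [Finset.coe_Iic, Set.mem_Iic, Finsupp.le_def, not_forall, not_le] at hbox
    obtain ⟨j, hj⟩ := hbox
    apply hθ
    simp only
    rw [Finsupp.prod_fintype _ _ (by simp), ← PowerSeries.coeff_def rfl,
      coeff_prod_pow_eq_zero hf (j := j) (by simpa using hj), smul_zero]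

lemma subst_mem_seriesAlgebra (hf : ∀ i, constantCoeff (f i) = 0) (P : MvPowerSeries (Fin s) K) :
    MvPowerSeries.subst f P ∈ seriesAlgebra f := by
  intro n
  let box : Fin s →₀ ℕ := Finsupp.equivFunOnFinite.symm fun _ => n
  refine ⟨MvPolynomial.aeval f (MvPowerSeries.trunc' K box P), ?_, fun i hi => ?_⟩
  · rw [Algebra.adjoin_range_eq_range_aeval]
    exact ⟨_, rfl⟩
  · rw [← MvPowerSeries.subst_coe, ← substSeries_eq_subst hf, ← substSeries_eq_subst hf,
      substSeries, substSeries, coeff_mk, coeff_mk, substCoeff, substCoeff]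
    refine Finset.sum_congr rfl fun θ hθ => ?_
    rw [MvPolynomial.coeff_coe, MvPowerSeries.coeff_trunc', if_pos]
    exact (Finset.mem_Iic.mp hθ).trans fun j => by simpa [box] using hi

lemma prod_pow_mem_seriesAlgebra (θ : Fin s →₀ ℕ) : ∏ j, f j ^ θ j ∈ seriesAlgebra f := by
  intro n
  exact ⟨_, prod_mem fun j _ => pow_mem (Algebra.subset_adjoin (Set.mem_range_self j)) _,
    fun _ _ => rfl⟩

variable {w : Fin s → ℕ}

lemma weightedOrder_le_order_subst (hf : ∀ i, constantCoeff (f i) = 0)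
    (hord : ∀ j, (f j).order = w j) (P : MvPowerSeries (Fin s) K) :
    P.weightedOrder w ≤ PowerSeries.order (MvPowerSeries.subst f P) := by
  have := MvPowerSeries.le_weightedOrder_subst_of_forall_ne_zero (fun _ => 1)
    (MvPowerSeries.hasSubst_of_constantCoeff_zero hf)
    (fun j => order_eq_top.not.mp (by simp [hord j])) P
  have horder (g : PowerSeries K) : MvPowerSeries.weightedOrder (fun _ => 1) g = g.order :=
    PowerSeries.order_eq_order.symm
  have hw : ENat.toNat ∘ MvPowerSeries.weightedOrder (fun _ => 1) ∘ f = w := funext fun j => by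
    simp [horder, hord]
  rwa [hw, horder] at this

lemma subst_eq_of_forall_le_order_sub (hf : ∀ i, constantCoeff (f i) = 0)
    (hord : ∀ j, (f j).order = w j) {g : PowerSeries K} {L : MvPowerSeries (Fin s) K}
    {Q : ℕ → MvPowerSeries (Fin s) K} {n : ℕ}
    (hQ : ∀ k, ((n + k : ℕ) : ℕ∞) ≤ (g - MvPowerSeries.subst f (Q k)).order)
    (hL : ∀ k, ((n + k : ℕ) : ℕ∞) ≤ (L - Q k).weightedOrder w) :
    MvPowerSeries.subst f L = g := by
  ext i
  have hsplit : MvPowerSeries.subst f L - g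
      = MvPowerSeries.subst f (L - Q (i + 1)) - (g - MvPowerSeries.subst f (Q (i + 1))) := by
    rw [MvPowerSeries.subst_sub (MvPowerSeries.hasSubst_of_constantCoeff_zero hf)]
    abel
  have hlt : (i : ℕ∞) < ((n + (i + 1) : ℕ) : ℕ∞) := by exact_mod_cast (by omega)
  rw [← sub_eq_zero, ← map_sub, hsplit, map_sub,
    coeff_of_lt_order i (hlt.trans_le (hQ (i + 1))), coeff_of_lt_order i (hlt.trans_le
      ((hL (i + 1)).trans (weightedOrder_le_order_subst hf hord _))), sub_zero]

lemma aeval_X_pow_eq_monomial_coeff_aeval (hf : ∀ j, IsMonicOfOrder (f j) (w j))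
    {A : MvPolynomial (Fin s) K} {n : ℕ} (hA : A.IsWeightedHomogeneous w n) :
    MvPolynomial.aeval (fun j => (Polynomial.X : Polynomial K) ^ w j) A
      = Polynomial.monomial n (coeff n (MvPolynomial.aeval f A)) := by
  conv_lhs => rw [A.as_sum]
  conv_rhs => rw [A.as_sum]
  simp only [map_sum]
  refine Finset.sum_congr rfl fun θ hθ => ?_
  have hθn := hA (MvPolynomial.mem_support_iff.mp hθ)
  rw [MvPolynomial.aeval_X_pow_monomial, MvPolynomial.aeval_monomial,
    Finsupp.prod_fintype _ _ (by simp), Algebra.algebraMap_eq_smul_one, smul_mul_assoc, one_mul,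
    map_smul, ← hθn, (IsMonicOfOrder.prod_pow hf θ).2, smul_eq_mul, mul_one]

lemma oSet_eq_closure_iff (hf : ∀ j, IsMonicOfOrder (f j) (w j)) :
    oSet K (seriesAlgebra f) = AddSubmonoid.closure (Set.range w) ↔
      ∀ g ∈ seriesAlgebra f, g ≠ 0 → ∃ θ : Fin s →₀ ℕ, Finsupp.weight w θ = g.order.toNat := by
  simp only [Set.ext_iff, SetLike.mem_coe, AddSubmonoid.mem_closure_range_iff, oSet,
    Set.mem_ofPred_eq, ord_eq_toNat_order, ← Finsupp.weight_apply]
  refine ⟨fun h g hg hg0 => ?_, fun h n => ⟨?_, ?_⟩⟩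
  · obtain ⟨θ, hθ⟩ := (h _).mp ⟨g, hg, hg0, rfl⟩
    exact ⟨θ, hθ.symm⟩
  · rintro ⟨g, hg, hg0, rfl⟩
    obtain ⟨θ, hθ⟩ := h g hg hg0
    exact ⟨θ, hθ.symm⟩
  · rintro ⟨θ, rfl⟩
    have hθ := IsMonicOfOrder.prod_pow hf θ
    exact ⟨_, prod_pow_mem_seriesAlgebra θ, hθ.ne_zero, by rw [hθ.1, ENat.toNat_natCast]⟩

end Substitution

section Forward
variable {K : Type*} [Field K] {s : ℕ} {f : Fin s → PowerSeries K} {w : Fin s → ℕ}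

lemma exists_lt_order_sub_subst (hf : ∀ j, IsMonicOfOrder (f j) (w j)) (hw : ∀ j, 0 < w j)
    (hbasis : ∀ g ∈ seriesAlgebra f, g ≠ 0 → ∃ θ : Fin s →₀ ℕ, Finsupp.weight w θ = g.order.toNat)
    {g : PowerSeries K} (hg : g ∈ seriesAlgebra f) {n : ℕ} (hn : n ≤ g.order) :
    ∃ P : MvPowerSeries (Fin s) K,
      n ≤ P.weightedOrder w ∧ n < (g - MvPowerSeries.subst f P).order := by
  have ha := MvPowerSeries.hasSubst_of_constantCoeff_zero
    fun j => (hf j).constantCoeff_eq_zero (hw j)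
  rcases hn.lt_or_eq with hlt | heq
  · refine ⟨0, by simp, ?_⟩
    rwa [← MvPowerSeries.coe_substAlgHom ha, map_zero, sub_zero]
  obtain ⟨θ, hθ⟩ := hbasis g hg (order_eq_top.not.mp (by simp [← heq]))
  rw [← heq, ENat.toNat_natCast] at hθ
  have hmonic := IsMonicOfOrder.prod_pow hf θ
  rw [hθ] at hmonic
  refine ⟨MvPowerSeries.monomial θ (coeff n g), ?_, ?_⟩
  · classical
    rw [MvPowerSeries.weightedOrder_monomial, hθ]
    split_ifs <;> simp
  rw [MvPowerSeries.subst_monomial ha, Finsupp.prod_fintype _ _ (by simp)]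
  refine lt_of_lt_of_le (by exact_mod_cast n.lt_succ_self) (nat_le_order _ _ fun i hi => ?_)
  rw [map_sub, ← Algebra.smul_def, map_smul, smul_eq_mul]
  rcases (Nat.lt_succ_iff.mp hi).lt_or_eq with hin | rfl
  · rw [coeff_of_lt_order i (heq ▸ by exact_mod_cast hin),
      coeff_of_lt_order i (hmonic.1 ▸ by exact_mod_cast hin), mul_zero, sub_zero]
  · rw [hmonic.2, mul_one, sub_self]

lemma exists_subst_eq_of_le_order (hf : ∀ j, IsMonicOfOrder (f j) (w j)) (hw : ∀ j, 0 < w j)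
    (hbasis : ∀ g ∈ seriesAlgebra f, g ≠ 0 → ∃ θ : Fin s →₀ ℕ, Finsupp.weight w θ = g.order.toNat)
    {g : PowerSeries K} (hg : g ∈ seriesAlgebra f) {n : ℕ} (hn : n ≤ g.order) :
    ∃ Q : MvPowerSeries (Fin s) K, MvPowerSeries.subst f Q = g ∧ n ≤ Q.weightedOrder w := by
  have hf0 (j : Fin s) : constantCoeff (f j) = 0 := (hf j).constantCoeff_eq_zero (hw j)
  have ha := MvPowerSeries.hasSubst_of_constantCoeff_zero hf0
  -- stated for every `r`, so that `choose` yields a single reduction function to iterate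
  have step (k : ℕ) (r : PowerSeries K) : ∃ P : MvPowerSeries (Fin s) K, k ≤ P.weightedOrder w ∧
      (r ∈ seriesAlgebra f → k ≤ r.order → k < (r - MvPowerSeries.subst f P).order) := by
    by_cases hr : r ∈ seriesAlgebra f ∧ k ≤ r.order
    · obtain ⟨P, hP, hrP⟩ := exists_lt_order_sub_subst hf hw hbasis hr.1 hr.2
      exact ⟨P, hP, fun _ _ => hrP⟩
    · exact ⟨0, by simp, fun h1 h2 => absurd ⟨h1, h2⟩ hr⟩
  choose P hPw hPr using step
  let Q : ℕ → MvPowerSeries (Fin s) K := fun k =>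
    Nat.rec 0 (fun k Qk => Qk + P (n + k) (g - MvPowerSeries.subst f Qk)) k
  have hQ (k : ℕ) : ((n + k : ℕ) : ℕ∞) ≤ (g - MvPowerSeries.subst f (Q k)).order := by
    induction k with
    | zero =>
      change _ ≤ (g - MvPowerSeries.subst f 0).order
      rwa [← MvPowerSeries.coe_substAlgHom ha, map_zero, sub_zero, add_zero]
    | succ k ih =>
      have := hPr (n + k) _ (sub_mem hg (subst_mem_seriesAlgebra hf0 _)) ih
      change _ ≤ (g - MvPowerSeries.subst f (Q k + P (n + k) _)).order
      rw [MvPowerSeries.subst_add ha, ← sub_sub, ← add_assoc, Nat.cast_succ]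
      exact Order.add_one_le_of_lt this
  obtain ⟨L, hL⟩ := MvPowerSeries.exists_limit_of_le_weightedOrder_sub_succ w n Q fun k => by
    simpa [Q] using hPw (n + k) _
  exact ⟨L, subst_eq_of_forall_le_order_sub hf0 (fun j => (hf j).1) hQ hL,
    by simpa [Q] using hL 0⟩

end Forward

section Backward
attribute [local instance] MvPolynomial.weightedGradedAlgebra
variable {K : Type*} [Field K] {s : ℕ} {f : Fin s → PowerSeries K} {w : Fin s → ℕ}
  {ι : Type*} [Fintype ι] {F : ι → MvPolynomial (Fin s) K} {c : ι → ℕ}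

lemma aeval_X_pow_eq_monomial_coeff_subst (hf : ∀ j, IsMonicOfOrder (f j) (w j))
    (hw : ∀ j, 0 < w j) {Q : MvPowerSeries (Fin s) K} {d : ℕ} (hQ : d ≤ Q.weightedOrder w)
    {A : MvPolynomial (Fin s) K} (hAhom : A.IsWeightedHomogeneous w d)
    (hA : (A : MvPowerSeries (Fin s) K) = MvPowerSeries.weightedHomogeneousComponent w d Q) :
    MvPolynomial.aeval (fun j => (Polynomial.X : Polynomial K) ^ w j) A
      = Polynomial.monomial d (coeff d (MvPowerSeries.subst f Q)) := by
  have hf0 (j : Fin s) : constantCoeff (f j) = 0 := (hf j).constantCoeff_eq_zero (hw j)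
  have hrest := MvPowerSeries.le_weightedOrder_sub_weightedHomogeneousComponent hQ
  rw [← hA] at hrest
  have hlt : (d : ℕ∞) < order (MvPowerSeries.subst f (Q - (A : MvPowerSeries (Fin s) K))) :=
    lt_of_lt_of_le (by exact_mod_cast d.lt_succ_self)
      (hrest.trans (weightedOrder_le_order_subst hf0 (fun j => (hf j).1) _))
  rw [aeval_X_pow_eq_monomial_coeff_aeval hf hAhom, ← sub_add_cancel Q (A : MvPowerSeries _ K),
    MvPowerSeries.subst_add (MvPowerSeries.hasSubst_of_constantCoeff_zero hf0),
    MvPowerSeries.subst_coe, map_add, coeff_of_lt_order d hlt, zero_add]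

lemma exists_subst_eq_succ_le_weightedOrder (hf : ∀ j, IsMonicOfOrder (f j) (w j))
    (hw : ∀ j, 0 < w j)
    (hker : RingHom.ker (MvPolynomial.aeval fun j => (Polynomial.X : Polynomial K) ^ w j)
      = Ideal.span (Set.range F))
    (hF : ∀ i, (F i).IsWeightedHomogeneous w (c i))
    (hlift : ∀ i, ∃ L : MvPowerSeries (Fin s) K,
      MvPowerSeries.subst f L = MvPolynomial.aeval f (F i) ∧ c i < L.weightedOrder w)
    {Q : MvPowerSeries (Fin s) K} {d : ℕ} (hQ : d ≤ Q.weightedOrder w)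
    (hcoeff : coeff d (MvPowerSeries.subst f Q) = 0) :
    ∃ Q' : MvPowerSeries (Fin s) K, MvPowerSeries.subst f Q' = MvPowerSeries.subst f Q ∧
      ((d + 1 : ℕ) : ℕ∞) ≤ Q'.weightedOrder w := by
  have ha := MvPowerSeries.hasSubst_of_constantCoeff_zero
    fun j => (hf j).constantCoeff_eq_zero (hw j)
  obtain ⟨A, hAhom, hA⟩ :=
    MvPowerSeries.exists_coe_eq_weightedHomogeneousComponent (fun j => (hw j).ne') d Q
  have hrest := MvPowerSeries.le_weightedOrder_sub_weightedHomogeneousComponent hQ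
  rw [← hA] at hrest
  have hAker : A ∈ Ideal.span (Set.range F) := by
    rw [← hker, RingHom.mem_ker, aeval_X_pow_eq_monomial_coeff_subst hf hw hQ hAhom hA, hcoeff,
      map_zero]
  obtain ⟨g, hgA, hg⟩ := DirectSum.exists_sum_mul_mem_of_mem_span
    (MvPolynomial.weightedHomogeneousSubmodule K w) hF hAhom hAker
  choose L hLsubst hLord using hlift
  refine ⟨(Q - (A : MvPowerSeries (Fin s) K)) + ∑ i, (g i : MvPowerSeries (Fin s) K) * L i, ?_, ?_⟩
  · rw [MvPowerSeries.subst_add ha, MvPowerSeries.subst_sub ha, MvPowerSeries.subst_coe, hgA,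
      map_sum, ← MvPowerSeries.coe_substAlgHom ha, map_sum, sub_add_eq_add_sub, add_sub_assoc,
      add_eq_left, sub_eq_zero]
    refine Finset.sum_congr rfl fun i _ => ?_
    rw [map_mul, MvPowerSeries.substAlgHom_coe, MvPowerSeries.coe_substAlgHom, hLsubst, map_mul]
  · refine MvPowerSeries.le_weightedOrder w fun θ hθ => ?_
    rw [map_add, map_sum, MvPowerSeries.coeff_eq_zero_of_lt_weightedOrder w (hθ.trans_le hrest),
      zero_add]
    exact Finset.sum_eq_zero fun i _ => MvPowerSeries.coeff_eq_zero_of_lt_weightedOrder w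
      (hθ.trans_le (MvPowerSeries.succ_le_weightedOrder_coe_mul (hg i).1 (hg i).2 (hLord i)))

lemma exists_subst_eq_of_coeff_eq_zero (hf : ∀ j, IsMonicOfOrder (f j) (w j))
    (hw : ∀ j, 0 < w j)
    (hker : RingHom.ker (MvPolynomial.aeval fun j => (Polynomial.X : Polynomial K) ^ w j)
      = Ideal.span (Set.range F))
    (hF : ∀ i, (F i).IsWeightedHomogeneous w (c i))
    (hlift : ∀ i, ∃ L : MvPowerSeries (Fin s) K,
      MvPowerSeries.subst f L = MvPolynomial.aeval f (F i) ∧ c i < L.weightedOrder w)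
    (N : ℕ) (Q : MvPowerSeries (Fin s) K)
    (hQ : ∀ d < N, coeff d (MvPowerSeries.subst f Q) = 0) :
    ∃ Q' : MvPowerSeries (Fin s) K, MvPowerSeries.subst f Q' = MvPowerSeries.subst f Q ∧
      N ≤ Q'.weightedOrder w := by
  induction N with
  | zero => exact ⟨Q, rfl, by simp⟩
  | succ N ih =>
    obtain ⟨Q', hQ', hN⟩ := ih fun d hd => hQ d (by omega)
    obtain ⟨Q'', hQ'', hN'⟩ := exists_subst_eq_succ_le_weightedOrder hf hw hker hF hlift hN
      (by rw [hQ']; exact hQ N N.lt_succ_self)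
    exact ⟨Q'', hQ''.trans hQ', hN'⟩

lemma exists_weight_eq_toNat_order (hf : ∀ j, IsMonicOfOrder (f j) (w j))
    (hw : ∀ j, 0 < w j)
    (hker : RingHom.ker (MvPolynomial.aeval fun j => (Polynomial.X : Polynomial K) ^ w j)
      = Ideal.span (Set.range F))
    (hF : ∀ i, (F i).IsWeightedHomogeneous w (c i))
    (hlift : ∀ i, ∃ L : MvPowerSeries (Fin s) K,
      MvPowerSeries.subst f L = MvPolynomial.aeval f (F i) ∧ c i < L.weightedOrder w)
    {g : PowerSeries K} (hg : g ∈ seriesAlgebra f) (hg0 : g ≠ 0) :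
    ∃ θ : Fin s →₀ ℕ, Finsupp.weight w θ = g.order.toNat := by
  have hf0 (j : Fin s) : constantCoeff (f j) = 0 := (hf j).constantCoeff_eq_zero (hw j)
  set n := g.order.toNat
  obtain ⟨p, hp, hpg⟩ := hg n
  obtain ⟨P, rfl⟩ : p ∈ (MvPolynomial.aeval f).range :=
    Algebra.adjoin_range_eq_range_aeval K f ▸ hp
  simp only [AlgHom.toRingHom_eq_coe, RingHom.coe_coe] at hpg
  obtain ⟨Q, hQ, hnQ⟩ := exists_subst_eq_of_coeff_eq_zero hf hw hker hF hlift n P fun d hd => by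
    rw [MvPowerSeries.subst_coe, ← hpg d hd.le, coeff_of_lt_order_toNat d hd]
  have hQn : Q.weightedOrder w ≤ n := by
    refine (weightedOrder_le_order_subst hf0 (fun j => (hf j).1) Q).trans (order_le n ?_)
    rw [hQ, MvPowerSeries.subst_coe, ← hpg n le_rfl]
    exact coeff_order hg0
  have hQeq := le_antisymm hQn hnQ
  obtain ⟨θ, -, hθ⟩ := MvPowerSeries.exists_coeff_ne_zero_and_weightedOrder w
    (f := Q) (by rw [hQeq, ENat.toNat_natCast])
  exact ⟨θ, by exact_mod_cast hθ.trans hQeq⟩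

lemma exists_lift_prod_pow_sub (hf : ∀ j, IsMonicOfOrder (f j) (w j)) (hw : ∀ j, 0 < w j)
    {a b : Fin s →₀ ℕ} (hab : Finsupp.weight w a = Finsupp.weight w b)
    (h : (∏ j, f j ^ a j) - ∏ j, f j ^ b j ≠ 0 → ∃ Q : MvPowerSeries (Fin s) K,
      MvPowerSeries.subst f Q = (∏ j, f j ^ a j) - ∏ j, f j ^ b j ∧
        ((∏ j, f j ^ a j) - ∏ j, f j ^ b j).order.toNat ≤ Q.weightedOrder w) :
    ∃ L : MvPowerSeries (Fin s) K, MvPowerSeries.subst f L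
      = MvPolynomial.aeval f (MvPolynomial.monomial a (1 : K) - MvPolynomial.monomial b 1) ∧
        Finsupp.weight w a < L.weightedOrder w := by
  have hS : MvPolynomial.aeval f (MvPolynomial.monomial a (1 : K) - MvPolynomial.monomial b 1)
      = (∏ j, f j ^ a j) - ∏ j, f j ^ b j := by
    simp [MvPolynomial.aeval_monomial, Finsupp.prod_fintype]
  rw [hS]
  by_cases hS0 : (∏ j, f j ^ a j) - ∏ j, f j ^ b j = 0
  · refine ⟨0, ?_, by simp⟩
    rw [hS0, ← MvPowerSeries.coe_substAlgHom (MvPowerSeries.hasSubst_of_constantCoeff_zero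
      fun j => (hf j).constantCoeff_eq_zero (hw j)), map_zero]
  obtain ⟨Q, hQ, hQord⟩ := h hS0
  refine ⟨Q, hQ, lt_of_lt_of_le ?_ hQord⟩
  rw [coe_toNat_order hS0]
  exact (IsMonicOfOrder.prod_pow hf a).lt_order_sub (hab ▸ IsMonicOfOrder.prod_pow hf b)

end Backward

theorem stmt_7_general (K : Type*) [Field K] {s r : ℕ} (f : Fin s → PowerSeries K)
    (hford : ∀ i, 0 < ord K (f i))
    (hmonic : ∀ i, coeff (ord K (f i)) (f i) = 1)
    (α β : Fin r → (Fin s →₀ ℕ))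
    (hker : RingHom.ker (MvPolynomial.aeval fun i => (Polynomial.X : Polynomial K) ^ ord K (f i))
      = Ideal.span (Set.range fun i =>
          (MvPolynomial.monomial (α i) (1 : K) - MvPolynomial.monomial (β i) (1 : K)))) :
    (oSet K (seriesAlgebra f)
        = ↑(AddSubmonoid.closure (Set.range fun j => ord K (f j)))) ↔
      (∀ i : Fin r,
        (∏ j, f j ^ (α i) j) - (∏ j, f j ^ (β i) j) ≠ 0 →
        ∃ Q : MvPowerSeries (Fin s) K,
          substSeries f Q = (∏ j, f j ^ (α i) j) - (∏ j, f j ^ (β i) j) ∧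
          ∀ θ : Fin s →₀ ℕ, MvPowerSeries.coeff θ Q ≠ 0 →
            ord K ((∏ j, f j ^ (α i) j) - (∏ j, f j ^ (β i) j))
              ≤ ∑ j, θ j * ord K (f j)) := by
  have hf (j : Fin s) : IsMonicOfOrder (f j) (ord K (f j)) := isMonicOfOrder_ord (hmonic j)
  have hf0 (j : Fin s) : constantCoeff (f j) = 0 := (hf j).constantCoeff_eq_zero (hford j)
  have hweight (i : Fin r) := MvPolynomial.weight_eq_of_monomial_sub_mem_ker
    (hker ▸ Ideal.subset_span (Set.mem_range_self i))
  simp only [substSeries_eq_subst hf0, ord_eq_toNat_order (_ - _), ← smul_eq_mul,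
    ← Finsupp.weight_eq_sum, ← MvPowerSeries.nat_le_weightedOrder_iff]
  rw [oSet_eq_closure_iff hf]
  refine ⟨fun hbasis i _ => ?_, fun hcond g hg hg0 => ?_⟩
  · exact exists_subst_eq_of_le_order hf hford hbasis
      (sub_mem (prod_pow_mem_seriesAlgebra _) (prod_pow_mem_seriesAlgebra _))
      (ENat.natCast_toNat_le_self _)
  · exact exists_weight_eq_toNat_order hf hford hker
      (fun i => (MvPolynomial.isWeightedHomogeneous_monomial _ _ _ rfl).sub
        (MvPolynomial.isWeightedHomogeneous_monomial _ _ _ (hweight i).symm))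
      (fun i => exists_lift_prod_pow_sub hf hford (hweight i) (hcond i)) hg hg0

/-- `{f₁,…,f_s}` is a basis of `R = K⟦f₁,…,f_s⟧` iff each `Sᵢ ≠ 0` admits an expression
`Sᵢ = Q(f₁,…,f_s)` in which every monomial of `Q` has weight `≥ o(Sᵢ)`. Here the `Fᵢ` are
binomials generating the kernel of `φ : K[X₁,…,X_s] → K[x]`, `Xᵢ ↦ x^{o(fᵢ)}`, and
`Sᵢ = f₁^{αᵢ₁}⋯f_s^{αᵢ_s} − f₁^{βᵢ₁}⋯f_s^{βᵢ_s}`. -/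
theorem stmt_7 (K : Type*) [Field K] {s r : ℕ} (f : Fin s → PowerSeries K)
    (hf0 : ∀ i, f i ≠ 0) (hford : ∀ i, 0 < ord K (f i))
    (hmonic : ∀ i, coeff (ord K (f i)) (f i) = 1)
    (hlen : FiniteLengthQuot K (seriesAlgebra f))
    (α β : Fin r → (Fin s →₀ ℕ))
    (hker : RingHom.ker (MvPolynomial.aeval fun i => (Polynomial.X : Polynomial K) ^ ord K (f i))
      = Ideal.span (Set.range fun i =>
          (MvPolynomial.monomial (α i) (1 : K) - MvPolynomial.monomial (β i) (1 : K)))) :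
    (oSet K (seriesAlgebra f)
        = ↑(AddSubmonoid.closure (Set.range fun j => ord K (f j)))) ↔
      (∀ i : Fin r,
        (∏ j, f j ^ (α i) j) - (∏ j, f j ^ (β i) j) ≠ 0 →
        ∃ Q : MvPowerSeries (Fin s) K,
          substSeries f Q = (∏ j, f j ^ (α i) j) - (∏ j, f j ^ (β i) j) ∧
          ∀ θ : Fin s →₀ ℕ, MvPowerSeries.coeff θ Q ≠ 0 →
            ord K ((∏ j, f j ^ (α i) j) - (∏ j, f j ^ (β i) j))
              ≤ ∑ j, θ j * ord K (f j)) :=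
  stmt_7_general K f hford hmonic α β hker
end

section
/- With R = K⟦f₁,…,f_s⟧ as in the context, R possesses exactly one minimal reduced basis: there exists a minimal reduced basis of R, and any two minimal reduced bases of R are equal as sets. -/
set_option synthInstance.maxHeartbeats 1000000
set_option maxHeartbeats 1000000

open PowerSeries

/-- The minimal generating set of the numerical semigroup `o(R)`: the minimal elements of
`o(R) ∖ {0}` with respect to the partial order `b ≤_S a ↔ a − b ∈ o(R)`. -/
def minGens (K : Type*) [Field K] (R : Subalgebra K (PowerSeries K)) : Set ℕ :=
  {a | a ∈ oSet K R ∧ a ≠ 0 ∧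
    ∀ b ∈ oSet K R, b ≠ 0 → (∃ u ∈ oSet K R, a = b + u) → b = a}

/-- `B` is a minimal reduced basis of `R`: a finite set of monic elements of `R` whose
orders form the minimal generating set of the numerical semigroup `o(R)` (in particular
they generate `o(R)`), and such that for each `g ∈ B` the support of `g − x^{o(g)}` is
contained in `ℕ ∖ o(R)`. -/
def IsMinimalReducedBasis (K : Type*) [Field K] (R : Subalgebra K (PowerSeries K))
    (B : Finset (PowerSeries K)) : Prop :=
  (↑B ⊆ (R : Set (PowerSeries K))) ∧
  (∀ g ∈ B, coeff (ord K g) g = 1) ∧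
  (oSet K R = ↑(AddSubmonoid.closure (ord K '' ↑B))) ∧
  (ord K '' ↑B = minGens K R) ∧
  (∀ g ∈ B, ∀ i : ℕ, coeff i (g - (X : PowerSeries K) ^ ord K g) ≠ 0 → i ∉ oSet K R)

/-!
The orders of elements of `R` form a numerical semigroup: finite length of `K⟦x⟧/R` makes the
descending chain of images of the ideals `(x^n)` in the quotient stabilise, which puts every
large `n` in `o(R)`, so `o(R)` has finitely many minimal generators. For each generator `a`, take
a monic element of order `a` and subtract, one index at a time, multiples of monic elements of
`R` to kill its coefficients at the elements of `o(R)` beyond `a`; these corrections have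
increasing orders, so they converge `x`-adically, and the limit stays in `R` because `R` is
`x`-adically closed. A reduced element is determined by its order: the difference of two reduced
elements of the same order lies in `R` but has no coefficient in `o(R)`, so it vanishes.
-/

section MinimalReducedBasis

variable {K : Type*} [Field K]

lemma ord_eq_toNat_order_s8 (f : PowerSeries K) : ord K f = f.order.toNat := by
  by_cases hf : f = 0
  · simp [hf, ord]
  have hne : {i | coeff i f ≠ 0}.Nonempty := by
    by_contra h
    exact hf (ext fun i => by_contra fun hi => h ⟨i, hi⟩)
  rw [order_eq_nat.mpr ⟨Nat.sInf_mem hne, fun i hi => not_not.mp (Nat.notMem_of_lt_sInf hi)⟩]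
  rfl

lemma coeff_ord_ne_zero {f : PowerSeries K} (hf : f ≠ 0) : coeff (ord K f) f ≠ 0 :=
  ord_eq_toNat_order_s8 f ▸ coeff_order hf

lemma coeff_of_lt_ord {f : PowerSeries K} {i : ℕ} (hi : i < ord K f) : coeff i f = 0 :=
  coeff_of_lt_order_toNat i (ord_eq_toNat_order_s8 f ▸ hi)

lemma ord_eq_of_coeff {f : PowerSeries K} {n : ℕ} (hn : coeff n f ≠ 0)
    (hlt : ∀ i < n, coeff i f = 0) : ord K f = n := by
  rw [ord_eq_toNat_order_s8, order_eq_nat.mpr ⟨hn, hlt⟩, ENat.toNat_natCast]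

lemma ord_mul {f g : PowerSeries K} (hf : f ≠ 0) (hg : g ≠ 0) :
    ord K (f * g) = ord K f + ord K g := by
  simp only [ord_eq_toNat_order_s8, order_mul]
  exact ENat.toNat_add (order_eq_top.not.mpr hf) (order_eq_top.not.mpr hg)

variable {R : Subalgebra K (PowerSeries K)}

def oSubmonoid (R : Subalgebra K (PowerSeries K)) : AddSubmonoid ℕ where
  carrier := oSet K R
  add_mem' := by
    rintro _ _ ⟨f, hfR, hf0, rfl⟩ ⟨g, hgR, hg0, rfl⟩
    exact ⟨f * g, R.mul_mem hfR hgR, mul_ne_zero hf0 hg0, ord_mul hf0 hg0⟩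
  zero_mem' := ⟨1, R.one_mem, one_ne_zero, ord_eq_of_coeff (by simp) (by omega)⟩

lemma closure_minGens : AddSubmonoid.closure (minGens K R) = oSubmonoid R := by
  refine le_antisymm (AddSubmonoid.closure_le.mpr fun a ha => ha.1) fun a ha => ?_
  induction a using Nat.strong_induction_on with
  | _ a ih =>
    by_cases ha0 : a = 0
    · exact ha0 ▸ zero_mem _
    by_cases hmin : a ∈ minGens K R
    · exact AddSubmonoid.subset_closure hmin
    obtain ⟨b, hb, hb0, ⟨u, hu, rfl⟩, hba⟩ : ∃ b ∈ oSet K R, b ≠ 0 ∧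
        (∃ u ∈ oSet K R, a = b + u) ∧ b ≠ a := by
      by_contra! h
      exact hmin ⟨ha, ha0, h⟩
    exact add_mem (ih b (by omega) hb) (ih u (by omega) hu)

lemma minGens_finite {N : ℕ} (hN : Set.Ici N ⊆ oSet K R) : (minGens K R).Finite := by
  refine (Set.finite_Iic (2 * N + 1)).subset fun a ⟨_, _, hmin⟩ => Set.mem_Iic.mpr ?_
  by_contra! h
  have := hmin (N + 1) (hN (by simp)) (by omega)
    ⟨a - (N + 1), hN (Set.mem_Ici.mpr (by omega)), by omega⟩
  omega

lemma exists_Ici_subset_oSet (h : FiniteLengthQuot K R) : ∃ N, Set.Ici N ⊆ oSet K R := by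
  set p := LinearMap.range (Algebra.linearMap R (PowerSeries K))
  have : IsArtinian R (PowerSeries K ⧸ p) := (isFiniteLength_iff_isNoetherian_isArtinian.mp h).2
  let I : ℕ →o (Submodule R (PowerSeries K ⧸ p))ᵒᵈ :=
    ⟨fun n => ((Ideal.span {X ^ n}).restrictScalars R).map p.mkQ, fun m n hmn =>
      Submodule.map_mono (Ideal.span_singleton_le_span_singleton.mpr (pow_dvd_pow X hmn))⟩
  obtain ⟨N, hN⟩ := IsArtinian.monotone_stabilizes I
  refine ⟨N, fun n (hn : N ≤ n) => ?_⟩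
  have hXn : p.mkQ (X ^ n) ∈ ((Ideal.span {X ^ (n + 1)}).restrictScalars R).map p.mkQ := by
    have hstable : I n = I (n + 1) := (hN n hn).symm.trans (hN (n + 1) (by omega))
    change _ ∈ OrderDual.ofDual (I (n + 1))
    exact hstable ▸ Submodule.mem_map_of_mem (Ideal.subset_span rfl)
  obtain ⟨g, hg, hgX⟩ := hXn
  obtain ⟨r, hr⟩ : X ^ n - g ∈ p := (Submodule.Quotient.eq p).mp hgX.symm
  have hgc : ∀ i ≤ n, coeff i g = 0 :=
    fun i hi => X_pow_dvd_iff.mp (Ideal.mem_span_singleton.mp hg) i (by omega)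
  have hcoeff : coeff n (X ^ n - g : PowerSeries K) ≠ 0 := by simp [hgc n le_rfl]
  refine ⟨X ^ n - g, hr ▸ r.2, fun h0 => hcoeff (by rw [h0, map_zero]), ord_eq_of_coeff hcoeff ?_⟩
  intro i hi
  simp [hgc i hi.le, coeff_X_pow, hi.ne]

lemma exists_monic {b : ℕ} (hb : b ∈ oSet K R) : ∃ m ∈ R, ord K m = b ∧ coeff b m = 1 := by
  obtain ⟨q, hqR, hq0, rfl⟩ := hb
  have hc := coeff_ord_ne_zero hq0
  refine ⟨(coeff (ord K q) q)⁻¹ • q, R.smul_mem hqR _, ord_eq_of_coeff ?_ fun i hi => ?_, ?_⟩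
  · simp [hc]
  · simp [coeff_of_lt_ord hi]
  · simp [hc]

def IsReducedIn (R : Subalgebra K (PowerSeries K)) (g : PowerSeries K) : Prop :=
  ∀ i : ℕ, coeff i (g - X ^ ord K g) ≠ 0 → i ∉ oSet K R

lemma IsReducedIn.coeff_eq_zero {g : PowerSeries K} (hg : IsReducedIn R g) {i : ℕ}
    (hi : i ∈ oSet K R) : coeff i (g - X ^ ord K g) = 0 :=
  by_contra fun h => hg i h hi

lemma IsReducedIn.coeff_ord {g : PowerSeries K} (hg : IsReducedIn R g)
    (hord : ord K g ∈ oSet K R) : coeff (ord K g) g = 1 := by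
  simpa [sub_eq_zero] using hg.coeff_eq_zero hord

lemma IsReducedIn.eq {g g' : PowerSeries K} (hg : g ∈ R) (hg' : g' ∈ R)
    (hord : ord K g = ord K g') (hr : IsReducedIn R g) (hr' : IsReducedIn R g') : g = g' := by
  by_contra hne
  have hne' : g - g' ≠ 0 := sub_ne_zero.mpr hne
  set j := ord K (g - g') with hj
  have hjR : j ∈ oSet K R := ⟨g - g', R.sub_mem hg hg', hne', rfl⟩
  have hsplit : g - g' = (g - X ^ ord K g) - (g' - X ^ ord K g') := by rw [hord]; ring
  apply coeff_ord_ne_zero hne'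
  rw [← hj, hsplit, map_sub, hr.coeff_eq_zero hjR, hr'.coeff_eq_zero hjR, sub_zero]

lemma IsMinimalReducedBasis.subset {B B' : Finset (PowerSeries K)}
    (hB : IsMinimalReducedBasis K R B) (hB' : IsMinimalReducedBasis K R B') : B ⊆ B' := by
  intro g hg
  obtain ⟨g', hg', hord⟩ : ord K g ∈ ord K '' ↑B' :=
    hB'.2.2.2.1 ▸ hB.2.2.2.1 ▸ ⟨g, hg, rfl⟩
  rwa [IsReducedIn.eq (hB.1 hg) (hB'.1 hg') hord.symm (hB.2.2.2.2 g hg) (hB'.2.2.2.2 g' hg')]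

lemma IsMinimalReducedBasis.eq {B B' : Finset (PowerSeries K)}
    (hB : IsMinimalReducedBasis K R B) (hB' : IsMinimalReducedBasis K R B') : B = B' :=
  (hB.subset hB').antisymm (hB'.subset hB)

variable {S : Subalgebra K (PowerSeries K)}

lemma mem_adicClosure_of_approx {g : PowerSeries K}
    (h : ∀ n, ∃ p ∈ adicClosure S, ∀ i ≤ n, coeff i g = coeff i p) : g ∈ adicClosure S :=
  fun n =>
    let ⟨_, hp, hgp⟩ := h n
    let ⟨q, hq, hpq⟩ := hp n
    ⟨q, hq, fun i hi => (hgp i hi).trans (hpq i hi)⟩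

lemma coeff_eq_of_stable {p : ℕ → PowerSeries K}
    (hstab : ∀ n, ∀ i ≤ n, coeff i (p (n + 1)) = coeff i (p n)) {i n m : ℕ} (hi : i ≤ n)
    (hnm : n ≤ m) : coeff i (p m) = coeff i (p n) := by
  induction m, hnm using Nat.le_induction with
  | base => rfl
  | succ m hnm ih => rw [hstab m i (hi.trans hnm), ih]

lemma mk_coeff_diag_mem_adicClosure {p : ℕ → PowerSeries K} (hp : ∀ n, p n ∈ adicClosure S)
    (hstab : ∀ n, ∀ i ≤ n, coeff i (p (n + 1)) = coeff i (p n)) :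
    mk (fun i => coeff i (p i)) ∈ adicClosure S :=
  mem_adicClosure_of_approx fun n =>
    ⟨p n, hp n, fun i hi => by rw [coeff_mk, coeff_eq_of_stable hstab le_rfl hi]⟩

lemma exists_mem_agreeing_upto_vanishing_on_oSet {g : PowerSeries K} (hg : g ∈ adicClosure S)
    (a : ℕ) : ∃ h ∈ adicClosure S, (∀ i ≤ a, coeff i h = coeff i g) ∧
      ∀ i ∈ oSet K (adicClosure S), a < i → coeff i h = 0 := by
  classical
  set R := adicClosure S
  choose! M hMR hMord hMmonic using fun b (hb : b ∈ oSet K R) => exists_monic hb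
  let step (b : ℕ) (q : PowerSeries K) : PowerSeries K :=
    if a < b ∧ b ∈ oSet K R then q - coeff b q • M b else q
  have step_mem {b q} (hq : q ∈ R) : step b q ∈ R := by
    unfold step; split_ifs with hb
    exacts [R.sub_mem hq (R.smul_mem (hMR b hb.2) _), hq]
  have coeff_step {b q i} (hi : i < b ∨ i ≤ a) : coeff i (step b q) = coeff i q := by
    unfold step; split_ifs with hb
    · rw [map_sub, map_smul, coeff_of_lt_ord (f := M b) (by rw [hMord b hb.2]; omega), smul_zero,
        sub_zero]
    · rfl
  have coeff_step_self {b q} (hb : a < b) (hbR : b ∈ oSet K R) : coeff b (step b q) = 0 := by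
    simp [step, hb, hbR, hMmonic b hbR]
  let p (n : ℕ) : PowerSeries K := Nat.rec g (fun n q => step (n + 1) q) n
  have hpR (n : ℕ) : p n ∈ R := by
    induction n with
    | zero => exact hg
    | succ n ih => exact step_mem ih
  have hstab (n : ℕ) : ∀ i ≤ n, coeff i (p (n + 1)) = coeff i (p n) :=
    fun i hi => coeff_step (b := n + 1) (q := p n) (.inl (by omega))
  have hlow (n : ℕ) : ∀ i ≤ a, coeff i (p n) = coeff i g := by
    induction n with
    | zero => exact fun _ _ => rfl
    | succ n ih => exact fun i hi => (coeff_step (.inr hi)).trans (ih i hi)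
  have hhigh (n : ℕ) : ∀ i ∈ oSet K R, a < i → i ≤ n → coeff i (p n) = 0 := by
    induction n with
    | zero => exact fun i _ hai hi => absurd hai (by omega)
    | succ n ih =>
      intro i hiR hai hi
      rcases hi.lt_or_eq with hi | rfl
      · rw [hstab n i (by omega), ih i hiR hai (by omega)]
      · exact coeff_step_self hai hiR
  refine ⟨mk fun i => coeff i (p i), mk_coeff_diag_mem_adicClosure hpR hstab,
    fun i hi => ?_, fun i hiR hai => ?_⟩
  · rw [coeff_mk, hlow i i hi]
  · rw [coeff_mk, hhigh i i hiR hai le_rfl]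

lemma exists_isReducedIn {a : ℕ} (ha : a ∈ oSet K (adicClosure S)) :
    ∃ g ∈ adicClosure S, ord K g = a ∧ IsReducedIn (adicClosure S) g := by
  obtain ⟨m, hmR, hmord, hmmonic⟩ := exists_monic ha
  obtain ⟨g, hgR, hlow, hhigh⟩ := exists_mem_agreeing_upto_vanishing_on_oSet hmR a
  have hlt {i} (hi : i < a) : coeff i g = 0 := by
    rw [hlow i hi.le, coeff_of_lt_ord (hmord ▸ hi)]
  have hord : ord K g = a :=
    ord_eq_of_coeff (by rw [hlow a le_rfl, hmmonic]; exact one_ne_zero) fun i hi => hlt hi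
  refine ⟨g, hgR, hord, fun i hi hiR => hi ?_⟩
  rw [hord, map_sub, coeff_X_pow]
  rcases lt_trichotomy i a with hia | rfl | hia
  · rw [hlt hia, if_neg hia.ne, sub_zero]
  · rw [hlow i le_rfl, hmmonic, if_pos rfl, sub_self]
  · rw [hhigh i hiR hia, if_neg hia.ne', sub_zero]

lemma exists_isMinimalReducedBasis (hfin : (minGens K (adicClosure S)).Finite) :
    ∃ B, IsMinimalReducedBasis K (adicClosure S) B := by
  classical
  set R := adicClosure S
  choose! red hredR hredord hred using fun a (ha : a ∈ minGens K R) => exists_isReducedIn ha.1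
  have hB : (↑(hfin.toFinset.image red) : Set (PowerSeries K)) = red '' minGens K R := by
    rw [Finset.coe_image, Set.Finite.coe_toFinset]
  have hord : ord K '' (red '' minGens K R) = minGens K R := by
    rw [Set.image_image, Set.image_congr hredord, Set.image_id']
  have hmem {g} (hg : g ∈ hfin.toFinset.image red) : ∃ a ∈ minGens K R, red a = g := by
    simpa using hg
  refine ⟨hfin.toFinset.image red, ?_, fun g hg => ?_, ?_, by rw [hB, hord], fun g hg => ?_⟩
  · rw [hB]
    rintro _ ⟨a, ha, rfl⟩
    exact hredR a ha
  · obtain ⟨a, ha, rfl⟩ := hmem hg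
    exact (hred a ha).coeff_ord ((hredord a ha).symm ▸ ha.1)
  · rw [hB, hord, closure_minGens]
    rfl
  · obtain ⟨a, ha, rfl⟩ := hmem hg
    exact hred a ha

end MinimalReducedBasis

theorem stmt_8_general (K : Type*) [Field K] {s : ℕ} (f : Fin s → PowerSeries K)
    (hlen : FiniteLengthQuot K (seriesAlgebra f)) :
    ∃! B : Finset (PowerSeries K), IsMinimalReducedBasis K (seriesAlgebra f) B := by
  obtain ⟨N, hN⟩ := exists_Ici_subset_oSet hlen
  obtain ⟨B, hB⟩ := exists_isMinimalReducedBasis (minGens_finite hN)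
  exact ⟨B, hB, fun B' hB' => hB'.eq hB⟩

/-- `R = K⟦f₁,…,f_s⟧` has exactly one minimal reduced basis. -/
theorem stmt_8 (K : Type*) [Field K] {s : ℕ} (f : Fin s → PowerSeries K)
    (hf0 : ∀ i, f i ≠ 0) (hford : ∀ i, 0 < ord K (f i))
    (hlen : FiniteLengthQuot K (seriesAlgebra f)) :
    ∃! B : Finset (PowerSeries K), IsMinimalReducedBasis K (seriesAlgebra f) B :=
  stmt_8_general K f hlen
end
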